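/- arXiv:2507.06120 — 5 statements merged into one kernel-verified Lean document; each statement's English description precedes it below -/
import Mathlib

section
/- Let m ≥ 1, k ≥ 1 and let A : ZMod (2k+1) → Finset (Fin m) be any family of finsets indexed cyclically. Define B i := ⋂_{ℓ=0}^{k-1} A (i + 2ℓ) for each i ∈ ZMod (2k+1). Then: (a) for every i, the union ⋃_{ℓ=0}^{k-1} B (i - 2ℓ) is contained in A i; and (b) if moreover A j ∩ A (j+1) = ∅ for all j ∈ ZMod (2k+1), then A i ∩ B j = ∅ whenever j ∈ ZMod (2k+1) does not belong to the set {i - 2ℓ : 0 ≤ ℓ ≤ k-1}. -/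
/-- The alternating `k`-fold intersection `B i = A i ∩ A (i+2) ∩ ⋯ ∩ A (i+2(k-1))` of a
cyclically indexed family `A : ZMod (2k+1) → Finset (Fin m)`. -/
def altInter {m k : ℕ} (A : ZMod (2 * k + 1) → Finset (Fin m)) (i : ZMod (2 * k + 1)) :
    Finset (Fin m) :=
  (Finset.range k).inf fun ℓ => A (i + 2 * (ℓ : ZMod (2 * k + 1)))

lemma altInter_subset {m k : ℕ} (A : ZMod (2 * k + 1) → Finset (Fin m))
    (i : ZMod (2 * k + 1)) {ℓ : ℕ} (hℓ : ℓ < k) :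
    altInter A i ⊆ A (i + 2 * (ℓ : ZMod (2 * k + 1))) :=
  Finset.le_iff_subset.mp (Finset.inf_le (Finset.mem_range.mpr hℓ))

theorem stmt2 {m k : ℕ} (hm : 1 ≤ m) (hk : 1 ≤ k)
    (A : ZMod (2 * k + 1) → Finset (Fin m)) :
    (∀ i : ZMod (2 * k + 1),
      ((Finset.range k).sup fun ℓ => altInter A (i - 2 * (ℓ : ZMod (2 * k + 1)))) ⊆ A i) ∧
    ((∀ j : ZMod (2 * k + 1), A j ∩ A (j + 1) = ∅) →
      ∀ i j : ZMod (2 * k + 1),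
        (∀ ℓ ∈ Finset.range k, j ≠ i - 2 * (ℓ : ZMod (2 * k + 1))) →
        A i ∩ altInter A j = ∅) := by
  have hn : NeZero (2 * k + 1) := ⟨by omega⟩
  constructor
  · intro i x hx
    rw [Finset.mem_sup] at hx
    obtain ⟨ℓ, hℓ, hx⟩ := hx
    have := altInter_subset A (i - 2 * (ℓ : ZMod (2 * k + 1))) (Finset.mem_range.mp hℓ) hx
    simpa using this
  · intro hA i j hj
    rw [Finset.eq_empty_iff_forall_notMem]
    rintro x hx
    rw [Finset.mem_inter] at hx
    obtain ⟨hxi, hxB⟩ := hx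
    set r := (i - j).val with hr
    have hrlt : r < 2 * k + 1 := ZMod.val_lt _
    have hij : i = j + (r : ZMod (2 * k + 1)) := by
      rw [hr, ZMod.natCast_val, ZMod.cast_id]; ring
    rcases Nat.even_or_odd r with ⟨ℓ, hℓ⟩ | ⟨ℓ, hℓ⟩
    · rcases Nat.lt_or_ge ℓ k with h | h
      · exact hj ℓ (Finset.mem_range.mpr h) (by
          rw [hij, hℓ]; push_cast; ring)
      · -- r = 2k, so j = i + 1
        have hr2k : r = 2 * k := by omega
        have hjeq : j = i + 1 := by
          have h0 : ((2 * k + 1 : ℕ) : ZMod (2 * k + 1)) = 0 := ZMod.natCast_self _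
          rw [hij, hr2k]
          push_cast at h0 ⊢
          linear_combination -h0
        have hxj : x ∈ A j := by
          have := altInter_subset A j (show 0 < k by omega) hxB
          simpa using this
        have := hA i
        rw [Finset.eq_empty_iff_forall_notMem] at this
        exact this x (Finset.mem_inter.mpr ⟨hxi, hjeq ▸ hxj⟩)
    · -- r = 2ℓ + 1, ℓ < k
      have hℓk : ℓ < k := by omega
      have hxjl : x ∈ A (j + 2 * (ℓ : ZMod (2 * k + 1))) := altInter_subset A j hℓk hxB
      have hieq : i = j + 2 * (ℓ : ZMod (2 * k + 1)) + 1 := by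
        rw [hij, hℓ]; push_cast; ring
      have := hA (j + 2 * (ℓ : ZMod (2 * k + 1)))
      rw [Finset.eq_empty_iff_forall_notMem] at this
      exact this x (Finset.mem_inter.mpr ⟨hxjl, hieq ▸ hxi⟩)
end

section
/- Let m ≥ 1, k ≥ 1 and let A : ZMod (2k+1) → Finset (Fin m) satisfy A i ∩ A (i+1) = ∅ for all i ∈ ZMod (2k+1). Define B i := ⋂_{ℓ=0}^{k-1} A (i + 2ℓ), and assume that ⋃_{i ∈ ZMod (2k+1)} B i = Fin m (the B i cover the whole vertex set). Then for every i ∈ ZMod (2k+1), A i = ⋃_{ℓ=0}^{k-1} B (i - 2ℓ). -/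
theorem stmt3 {m k : ℕ} (hm : 1 ≤ m) (hk : 1 ≤ k)
    (A : ZMod (2 * k + 1) → Finset (Fin m))
    (hconsec : ∀ i : ZMod (2 * k + 1), A i ∩ A (i + 1) = ∅)
    (hcover : (Finset.univ.sup fun i : ZMod (2 * k + 1) => altInter A i) = Finset.univ) :
    ∀ i : ZMod (2 * k + 1),
      A i = (Finset.range k).sup fun ℓ => altInter A (i - 2 * (ℓ : ZMod (2 * k + 1))) := by
  intro i
  ext x
  simp only [Finset.mem_sup, Finset.mem_range]
  constructor
  · intro hx
    have hxcov : x ∈ Finset.univ.sup fun j : ZMod (2 * k + 1) => altInter A j := by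
      rw [hcover]; exact Finset.mem_univ x
    rw [Finset.mem_sup] at hxcov
    obtain ⟨j, -, hxj⟩ := hxcov
    have hB : ∀ ℓ < k, x ∈ A (j + 2 * (ℓ : ZMod (2 * k + 1))) := by
      intro ℓ hℓ
      have hsub : altInter A j ≤ A (j + 2 * (ℓ : ZMod (2 * k + 1))) :=
        Finset.inf_le (Finset.mem_range.mpr hℓ)
      exact Finset.le_iff_subset.mp hsub hxj
    have hdis : ∀ a : ZMod (2 * k + 1), x ∈ A a → x ∉ A (a + 1) := by
      intro a ha hb
      have h : x ∈ A a ∩ A (a + 1) := Finset.mem_inter.mpr ⟨ha, hb⟩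
      rw [hconsec a] at h
      exact absurd h (Finset.notMem_empty x)
    set d := (j - i).val with hd
    have hdlt : d < 2 * k + 1 := ZMod.val_lt _
    have hj : j = i + (d : ZMod (2 * k + 1)) := by
      rw [hd, ZMod.natCast_val, ZMod.cast_id]; ring
    rcases Nat.even_or_odd d with ⟨e, he⟩ | ⟨e, he⟩
    · rcases Nat.eq_zero_or_pos e with rfl | hepos
      · refine ⟨0, hk, ?_⟩
        have hji : j = i := by
          have : d = 0 := by omega
          simp [hj, this]
        have : i - 2 * ((0 : ℕ) : ZMod (2 * k + 1)) = j := by simp [hji]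
        rw [this]; exact hxj
      · exfalso
        have hℓ : k - e < k := by omega
        have h1 : x ∈ A (j + 2 * ((k - e : ℕ) : ZMod (2 * k + 1))) := hB _ hℓ
        have key : ((d : ℕ) : ZMod (2 * k + 1)) + 2 * ((k - e : ℕ) : ZMod (2 * k + 1)) + 1
            = 0 := by
          have hnat : (d + 2 * (k - e) + 1 : ℕ) = 2 * k + 1 := by omega
          calc ((d : ℕ) : ZMod (2 * k + 1)) + 2 * ((k - e : ℕ) : ZMod (2 * k + 1)) + 1
              = ((d + 2 * (k - e) + 1 : ℕ) : ZMod (2 * k + 1)) := by push_cast; ring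
            _ = 0 := by rw [hnat]; exact ZMod.natCast_self _
        have h2 : i = j + 2 * ((k - e : ℕ) : ZMod (2 * k + 1)) + 1 := by
          rw [hj]; linear_combination -key
        exact hdis _ h1 (h2 ▸ hx)
    · rcases Nat.eq_zero_or_pos e with rfl | hepos
      · exfalso
        have hji : j = i + 1 := by
          have : d = 1 := by omega
          simp [hj, this]
        have hAj : x ∈ A j := by simpa using hB 0 hk
        exact hdis i hx (hji ▸ hAj)
      · refine ⟨k - e, by omega, ?_⟩
        have key : ((d : ℕ) : ZMod (2 * k + 1)) + 2 * ((k - e : ℕ) : ZMod (2 * k + 1))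
            = 0 := by
          have hnat : (d + 2 * (k - e) : ℕ) = 2 * k + 1 := by omega
          calc ((d : ℕ) : ZMod (2 * k + 1)) + 2 * ((k - e : ℕ) : ZMod (2 * k + 1))
              = ((d + 2 * (k - e) : ℕ) : ZMod (2 * k + 1)) := by push_cast; ring
            _ = 0 := by rw [hnat]; exact ZMod.natCast_self _
        have h2 : i - 2 * ((k - e : ℕ) : ZMod (2 * k + 1)) = j := by
          rw [hj]; linear_combination -key
        rw [h2]; exact hxj
  · rintro ⟨ℓ, hℓ, hx⟩
    have hle : altInter A (i - 2 * (ℓ : ZMod (2 * k + 1)))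
        ≤ A (i - 2 * (ℓ : ZMod (2 * k + 1)) + 2 * (ℓ : ZMod (2 * k + 1))) :=
      Finset.inf_le (Finset.mem_range.mpr hℓ)
    have := Finset.le_iff_subset.mp hle hx
    simpa using this
end

section
/- Let m ≥ 1, k ≥ 1 and let B : ZMod (2k+1) → Finset (Fin m) be pairwise disjoint finsets (B i ∩ B j = ∅ for i ≠ j). Define A i := ⋃_{ℓ=0}^{k-1} B (i - 2ℓ) for each i ∈ ZMod (2k+1). Then A i ∩ A (i+1) = ∅ for all i ∈ ZMod (2k+1). -/
theorem stmt4 {m k : ℕ} (hm : 1 ≤ m) (hk : 1 ≤ k)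
    (B : ZMod (2 * k + 1) → Finset (Fin m))
    (hdisj : ∀ i j : ZMod (2 * k + 1), i ≠ j → B i ∩ B j = ∅)
    (A : ZMod (2 * k + 1) → Finset (Fin m))
    (hA : ∀ i : ZMod (2 * k + 1),
      A i = (Finset.range k).sup fun ℓ => B (i - 2 * (ℓ : ZMod (2 * k + 1)))) :
    ∀ i : ZMod (2 * k + 1), A i ∩ A (i + 1) = ∅ := by
  intro i
  ext x
  simp only [Finset.mem_inter, Finset.notMem_empty, iff_false, not_and]
  intro hx hx'
  rw [hA i] at hx
  rw [hA (i+1)] at hx'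
  rw [Finset.mem_sup] at hx hx'
  obtain ⟨a, ha, hxa⟩ := hx
  obtain ⟨b, hb, hxb⟩ := hx'
  simp only [Finset.mem_range] at ha hb
  by_cases h : i - 2 * (a : ZMod (2*k+1)) = i + 1 - 2 * (b : ZMod (2*k+1))
  · -- derive 2*b = 2*a+1 as naturals
    have heq : ((2*b : ℕ) : ZMod (2*k+1)) = ((2*a+1 : ℕ) : ZMod (2*k+1)) := by
      push_cast
      linear_combination h
    have h1 : (2*b) % (2*k+1) = (2*a+1) % (2*k+1) := by
      have := congrArg ZMod.val heq
      rwa [ZMod.val_natCast, ZMod.val_natCast] at this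
    rw [Nat.mod_eq_of_lt (by omega), Nat.mod_eq_of_lt (by omega)] at h1
    omega
  · have := hdisj _ _ h
    have : x ∈ B (i - 2 * (a : ZMod (2*k+1))) ∩ B (i + 1 - 2 * (b : ZMod (2*k+1))) :=
      Finset.mem_inter.mpr ⟨hxa, hxb⟩
    rw [hdisj _ _ h] at this
    exact absurd this (Finset.notMem_empty x)
end

section
/- Let m ≥ 1, k ≥ 1 and let B : ZMod (2k+1) → Finset (Fin m) be pairwise disjoint finsets (B i ∩ B j = ∅ for i ≠ j). Define A i := ⋃_{ℓ=0}^{k-1} B (i - 2ℓ) for each i ∈ ZMod (2k+1). Then for every i ∈ ZMod (2k+1), the alternating intersection ⋂_{ℓ=0}^{k-1} A (i + 2ℓ) equals B i. -/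
theorem stmt5 {m k : ℕ} (hm : 1 ≤ m) (hk : 1 ≤ k)
    (B : ZMod (2 * k + 1) → Finset (Fin m))
    (hdisj : ∀ i j : ZMod (2 * k + 1), i ≠ j → B i ∩ B j = ∅)
    (A : ZMod (2 * k + 1) → Finset (Fin m))
    (hA : ∀ i : ZMod (2 * k + 1),
      A i = (Finset.range k).sup fun ℓ => B (i - 2 * (ℓ : ZMod (2 * k + 1)))) :
    ∀ i : ZMod (2 * k + 1), altInter A i = B i := by
  have hu : IsUnit (2 : ZMod (2 * k + 1)) := by
    have : ((2:ℕ) : ZMod (2*k+1)) = 2 := by norm_num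
    rw [← this, ZMod.isUnit_iff_coprime]
    exact Nat.coprime_two_left.2 ⟨k, by ring⟩
  -- uniqueness of box containing x
  have huniq : ∀ (x : Fin m) (a b : ZMod (2 * k + 1)), x ∈ B a → x ∈ B b → a = b := by
    intro x a b ha hb
    by_contra hne
    have := hdisj a b hne
    have : x ∈ B a ∩ B b := Finset.mem_inter.2 ⟨ha, hb⟩
    simp_all
  intro i
  ext x
  simp only [altInter, Finset.mem_inf, hA, Finset.mem_sup, Finset.mem_range]
  constructor
  · intro h
    obtain ⟨ℓ₀, hℓ₀, hx0⟩ := h 0 hk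
    simp only [Nat.cast_zero, mul_zero, add_zero] at hx0
    -- claim ℓ₀ = 0
    rcases Nat.eq_zero_or_pos ℓ₀ with h0 | h0
    · simpa [h0] using hx0
    · exfalso
      obtain ⟨ℓ', hℓ', hx'⟩ := h (k - ℓ₀) (by omega)
      have hje : i + 2 * ((k - ℓ₀ : ℕ) : ZMod (2 * k + 1)) - 2 * (ℓ' : ZMod (2 * k + 1))
          = i - 2 * ((ℓ₀ : ℕ) : ZMod (2 * k + 1)) := huniq x _ _ hx' hx0
      have h2 : (2 : ZMod (2 * k + 1)) * (ℓ' : ZMod (2 * k + 1))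
          = 2 * (((k - ℓ₀ : ℕ) : ZMod (2 * k + 1)) + ((ℓ₀ : ℕ) : ZMod (2 * k + 1))) := by
        linear_combination -hje
      have hc : (ℓ' : ZMod (2 * k + 1)) = ((k : ℕ) : ZMod (2 * k + 1)) := by
        have := hu.mul_left_cancel h2
        rw [this, ← Nat.cast_add]
        congr 1
        omega
      have hv1 : ((ℓ' : ℕ) : ZMod (2 * k + 1)).val = ℓ' :=
        ZMod.val_cast_of_lt (by omega)
      have hv2 : ((k : ℕ) : ZMod (2 * k + 1)).val = k :=
        ZMod.val_cast_of_lt (by omega)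
      rw [hc, hv2] at hv1
      omega
  · intro hx ℓ hℓ
    exact ⟨ℓ, hℓ, by simpa using hx⟩
end

section
/- Let k ≥ 1 and let v : ZMod (2k+1) → EuclideanSpace ℝ (Fin 2) be the vertices of the regular (2k+1)-gon inscribed in the unit circle, i.e. v j = (cos (2π j / (2k+1)), sin (2π j / (2k+1))) for j = 0, 1, …, 2k. Then for every nonempty set S ⊆ ZMod (2k+1), one has 0 ∈ intrinsicInterior ℝ (convexHull ℝ (v '' S)) if and only if there is no i ∈ ZMod (2k+1) with S ⊆ {i, i+1, …, i+k} (that is, S is not contained in any set of k+1 cyclically consecutive indices). -/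
/-!
If `S` lies in an arc of `k + 1` consecutive vertices, that arc subtends the angle
`2πk/(2k+1) < π`, so all of `v '' S` lies in the open half-plane facing the midpoint of the arc
and `0` is not even in the convex hull.
Otherwise there are `a, b, c ∈ S` such that each of the cyclic steps `a → b → c → a` advances
by between `1` and `k` vertices, i.e. by an angle `x ∈ (0, π)`, where `sin x > 0`. The identity
`sin (γ - β) • P α + sin (α - γ) • P β + sin (β - α) • P γ = 0` then writes `0` as a combination
with positive weights of three distinct, hence affinely independent, points `P α, P β, P γ` of the
unit circle, so `0` lies in the interior of their triangle.
-/

open Real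

noncomputable def circlePoint (θ : ℝ) : EuclideanSpace ℝ (Fin 2) := !₂[cos θ, sin θ]

lemma inner_circlePoint (α β : ℝ) : inner ℝ (circlePoint α) (circlePoint β) = cos (β - α) := by
  simp [circlePoint, PiLp.inner_apply, Fin.sum_univ_two, cos_sub]

lemma norm_circlePoint (θ : ℝ) : ‖circlePoint θ‖ = 1 := by
  have h := inner_circlePoint θ θ
  rw [real_inner_self_eq_norm_sq, sub_self, cos_zero] at h
  exact (pow_eq_one_iff_of_nonneg (norm_nonneg _) two_ne_zero).mp h

lemma circlePoint_ne_of_sin_sub_ne_zero {α β : ℝ} (h : sin (β - α) ≠ 0) :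
    circlePoint α ≠ circlePoint β := by
  intro hαβ
  have hcos := inner_circlePoint α β
  rw [hαβ, real_inner_self_eq_norm_sq, norm_circlePoint, one_pow] at hcos
  exact h (sin_eq_zero_iff_cos_eq.mpr (.inl hcos.symm))

lemma sin_sub_smul_circlePoint_add (α β γ : ℝ) :
    sin (γ - β) • circlePoint α + sin (α - γ) • circlePoint β + sin (β - α) • circlePoint γ
      = 0 := by
  ext i
  fin_cases i <;>
  · simp [circlePoint, sin_sub]
    ring

lemma zero_mem_interior_convexHull_of_affineIndependent {ι E : Type*} [Fintype ι]
    [NormedAddCommGroup E] [NormedSpace ℝ E] [FiniteDimensional ℝ E] {q : ι → E}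
    (hq : AffineIndependent ℝ q) (hcard : Fintype.card ι = Module.finrank ℝ E + 1)
    {w : ι → ℝ} (hw : ∀ i, 0 < w i) (hsum : ∑ i, w i • q i = 0) :
    (0 : E) ∈ interior (convexHull ℝ (Set.range q)) := by
  let b : AffineBasis ι ℝ E := ⟨q, hq, hq.affineSpan_eq_top_iff_card_eq_finrank_add_one.mpr hcard⟩
  have : Nonempty ι := Fintype.card_pos_iff.mp (by omega)
  set W := ∑ i, w i
  have hW : 0 < W := Finset.sum_pos (fun i _ => hw i) Finset.univ_nonempty
  have hw₁ : ∑ i, w i / W = 1 := by rw [← Finset.sum_div, div_self hW.ne']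
  have hcomb : Finset.univ.affineCombination ℝ b (fun i => w i / W) = 0 := by
    rw [Finset.affineCombination_eq_linear_combination _ _ _ hw₁]
    change ∑ i, (w i / W) • q i = 0
    simp_rw [div_eq_inv_mul, ← smul_smul, ← Finset.smul_sum, hsum, smul_zero]
  change (0 : E) ∈ interior (convexHull ℝ (Set.range b))
  rw [b.interior_convexHull, ← hcomb]
  intro i
  rw [b.coord_apply_combination_of_mem (Finset.mem_univ i) hw₁]
  exact div_pos (hw i) hW

lemma zero_mem_interior_convexHull_circlePoint {α β γ : ℝ} (hαβ : 0 < sin (β - α))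
    (hβγ : 0 < sin (γ - β)) (hγα : 0 < sin (α - γ)) :
    (0 : EuclideanSpace ℝ (Fin 2)) ∈
      interior (convexHull ℝ {circlePoint α, circlePoint β, circlePoint γ}) := by
  have hne : ∀ {x y : ℝ}, 0 < sin (y - x) → circlePoint x ≠ circlePoint y :=
    fun h => circlePoint_ne_of_sin_sub_ne_zero h.ne'
  have hsphere : ∀ θ, circlePoint θ ∈ (⟨0, 1⟩ : EuclideanGeometry.Sphere _) := by
    simp [EuclideanGeometry.mem_sphere, norm_circlePoint]
  have hindep : AffineIndependent ℝ ![circlePoint α, circlePoint β, circlePoint γ] :=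
    (EuclideanGeometry.Sphere.cospherical _).affineIndependent_of_mem_of_ne (hsphere α)
      (hsphere β) (hsphere γ) (hne hαβ) (hne hγα).symm (hne hβγ)
  have hrange : Set.range ![circlePoint α, circlePoint β, circlePoint γ] =
      {circlePoint α, circlePoint β, circlePoint γ} := by
    rw [Matrix.range_cons, Matrix.range_cons_cons_empty, Set.singleton_union]
  rw [← hrange]
  refine zero_mem_interior_convexHull_of_affineIndependent hindep (by simp)
    (w := ![sin (γ - β), sin (α - γ), sin (β - α)]) (fun i => by fin_cases i <;> assumption) ?_
  simpa [Fin.sum_univ_three] using sin_sub_smul_circlePoint_add α β γ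

lemma zero_notMem_convexHull_of_forall_inner_pos {E : Type*} [NormedAddCommGroup E]
    [InnerProductSpace ℝ E] {s : Set E} (u : E) (h : ∀ x ∈ s, 0 < inner ℝ u x) :
    (0 : E) ∉ convexHull ℝ s := fun h0 => by
  have : 0 < inner ℝ u 0 := convexHull_min h (convex_halfSpace_gt (innerₛₗ ℝ u).isLinear 0) h0
  simp at this

noncomputable def polygonAngle (n : ℕ) (j : ZMod n) : ℝ := 2 * π * j.val / n

lemma coe_polygonAngle_sub {n : ℕ} [NeZero n] (a b : ZMod n) :
    (polygonAngle n (b - a) : Angle) = polygonAngle n b - polygonAngle n a := by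
  rw [← Angle.coe_sub, Angle.angle_eq_iff_two_pi_dvd_sub]
  have hcast : (((b - a).val : ℤ) : ZMod n) = ((b.val - a.val : ℤ) : ZMod n) := by simp
  obtain ⟨m, hm⟩ := (ZMod.intCast_eq_intCast_iff_dvd_sub _ _ _).mp hcast
  refine ⟨-m, ?_⟩
  have hn : (n : ℝ) ≠ 0 := NeZero.ne _
  have hm' : ((b.val : ℝ) - a.val) - (b - a).val = n * m := by exact_mod_cast hm
  simp only [polygonAngle]
  field_simp
  push_cast
  linear_combination -hm'

lemma sin_polygonAngle_sub {n : ℕ} [NeZero n] (a b : ZMod n) :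
    sin (polygonAngle n b - polygonAngle n a) = sin (polygonAngle n (b - a)) := by
  rw [← Angle.sin_coe, ← Angle.sin_coe, Angle.coe_sub, coe_polygonAngle_sub]

lemma sin_polygonAngle_pos {k : ℕ} {j : ZMod (2 * k + 1)} (hj : j.val ∈ Set.Icc 1 k) :
    0 < sin (polygonAngle (2 * k + 1) j) := by
  have h1 : (1 : ℝ) ≤ j.val := by exact_mod_cast hj.1
  have hk : (j.val : ℝ) ≤ k := by exact_mod_cast hj.2
  apply sin_pos_of_pos_of_lt_pi
  · unfold polygonAngle; positivity
  · rw [polygonAngle, div_lt_iff₀ (by positivity)]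
    push_cast
    nlinarith [pi_pos]

lemma cos_polygonAngle_sub_pos {k : ℕ} {j : ZMod (2 * k + 1)} (hj : j.val ≤ k) :
    0 < cos (polygonAngle (2 * k + 1) j - π * k / (2 * k + 1)) := by
  have hk : (j.val : ℝ) ≤ k := by exact_mod_cast hj
  have hN : (0 : ℝ) < 2 * k + 1 := by positivity
  have harg : polygonAngle (2 * k + 1) j - π * k / (2 * k + 1) =
      π * (2 * j.val - k) / (2 * k + 1) := by
    rw [polygonAngle]; push_cast; ring
  rw [harg]
  apply cos_pos_of_mem_Ioo
  constructor
  · rw [lt_div_iff₀ hN]; nlinarith [pi_pos, (Nat.cast_nonneg j.val : (0 : ℝ) ≤ _)]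
  · rw [div_lt_iff₀ hN]; nlinarith [pi_pos]

lemma exists_le_eq_add_natCast_iff {n k : ℕ} [NeZero n] (hk : k < n) (i j : ZMod n) :
    (∃ ℓ : ℕ, ℓ ≤ k ∧ j = i + ℓ) ↔ (j - i).val ≤ k := by
  constructor
  · rintro ⟨ℓ, hℓ, rfl⟩
    rw [add_sub_cancel_left, ZMod.val_natCast_of_lt (hℓ.trans_lt hk)]
    exact hℓ
  · exact fun h => ⟨(j - i).val, h, by rw [ZMod.natCast_zmod_val, add_sub_cancel]⟩

lemma exists_cyclic_triple {k : ℕ} {S : Set (ZMod (2 * k + 1))}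
    (hS : ∀ i, ∃ j ∈ S, k < (j - i).val) :
    ∃ a ∈ S, ∃ b ∈ S, ∃ c ∈ S,
      (b - a).val ∈ Set.Icc 1 k ∧ (c - b).val ∈ Set.Icc 1 k ∧ (a - c).val ∈ Set.Icc 1 k := by
  have val_neg : ∀ x : ZMod (2 * k + 1), 0 < x.val → (-x).val = 2 * k + 1 - x.val :=
    fun x hx => by rw [ZMod.neg_val, if_neg (ZMod.val_pos.mp hx)]
  -- `c` is the first element of `S` past the arc starting at `a`; `b` lies past the arc at `c`.
  obtain ⟨a, ha, -⟩ := hS 0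
  obtain ⟨c, ⟨hc, hac⟩, hmin⟩ := Set.exists_min_image {c ∈ S | k < (c - a).val}
    (fun c => (c - a).val) (Set.toFinite _) (hS a)
  obtain ⟨b, hb, hcb⟩ := hS c
  have hca_lt := ZMod.val_lt (c - a)
  have hba_lt : (b - a).val < (c - a).val := by
    by_contra! hle
    have := ZMod.val_sub hle
    rw [sub_sub_sub_cancel_right] at this
    have := ZMod.val_lt (b - a)
    omega
  have hba_le : (b - a).val ≤ k := by
    by_contra! hgt
    exact (hmin b ⟨hb, hgt⟩).not_gt hba_lt
  have hcb_eq : (c - b).val = (c - a).val - (b - a).val := by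
    rw [← ZMod.val_sub hba_lt.le, sub_sub_sub_cancel_right]
  rw [← neg_sub, val_neg _ (by omega), hcb_eq] at hcb
  have hac_eq : (a - c).val = 2 * k + 1 - (c - a).val := by
    rw [← neg_sub, val_neg _ (by omega)]
  refine ⟨a, ha, b, hb, c, hc, ⟨?_, hba_le⟩, ⟨?_, ?_⟩, ⟨?_, ?_⟩⟩ <;> omega

lemma zero_notMem_convexHull_polygon {k : ℕ} {S : Set (ZMod (2 * k + 1))}
    {i : ZMod (2 * k + 1)} (hS : ∀ j ∈ S, (j - i).val ≤ k) :
    (0 : EuclideanSpace ℝ (Fin 2)) ∉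
      convexHull ℝ ((fun j => circlePoint (polygonAngle (2 * k + 1) j)) '' S) := by
  refine zero_notMem_convexHull_of_forall_inner_pos
    (circlePoint (polygonAngle (2 * k + 1) i + π * k / (2 * k + 1))) ?_
  rintro _ ⟨j, hj, rfl⟩
  rw [inner_circlePoint, ← Angle.cos_coe, sub_add_eq_sub_sub, Angle.coe_sub, Angle.coe_sub,
    ← coe_polygonAngle_sub, ← Angle.coe_sub, Angle.cos_coe]
  exact cos_polygonAngle_sub_pos (hS j hj)

lemma zero_mem_interior_convexHull_polygon {k : ℕ} {S : Set (ZMod (2 * k + 1))}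
    (hS : ∀ i, ∃ j ∈ S, k < (j - i).val) :
    (0 : EuclideanSpace ℝ (Fin 2)) ∈
      interior (convexHull ℝ ((fun j => circlePoint (polygonAngle (2 * k + 1) j)) '' S)) := by
  obtain ⟨a, ha, b, hb, c, hc, hab, hbc, hca⟩ := exists_cyclic_triple hS
  have hsin : ∀ {x y : ZMod (2 * k + 1)}, (y - x).val ∈ Set.Icc 1 k →
      0 < sin (polygonAngle (2 * k + 1) y - polygonAngle (2 * k + 1) x) := fun h => by
    rw [sin_polygonAngle_sub]
    exact sin_polygonAngle_pos h
  refine interior_mono (convexHull_mono ?_)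
    (zero_mem_interior_convexHull_circlePoint (hsin hab) (hsin hbc) (hsin hca))
  simp only [Set.insert_subset_iff, Set.singleton_subset_iff]
  exact ⟨Set.mem_image_of_mem _ ha, Set.mem_image_of_mem _ hb, Set.mem_image_of_mem _ hc⟩

theorem stmt11_general {k : ℕ}
    (v : ZMod (2 * k + 1) → EuclideanSpace ℝ (Fin 2))
    (hv : ∀ j : ZMod (2 * k + 1),
      v j = (WithLp.equiv 2 (Fin 2 → ℝ)).symm
        ![Real.cos (2 * π * (j.val : ℝ) / (2 * (k : ℝ) + 1)),
          Real.sin (2 * π * (j.val : ℝ) / (2 * (k : ℝ) + 1))]) :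
    ∀ S : Set (ZMod (2 * k + 1)), S.Nonempty →
      (0 ∈ intrinsicInterior ℝ (convexHull ℝ (v '' S)) ↔
        ¬ ∃ i : ZMod (2 * k + 1),
          S ⊆ {j : ZMod (2 * k + 1) | ∃ ℓ : ℕ, ℓ ≤ k ∧ j = i + (ℓ : ZMod (2 * k + 1))}) := by
  intro S _
  obtain rfl : v = fun j => circlePoint (polygonAngle (2 * k + 1) j) := by
    funext j
    simp [hv, circlePoint, polygonAngle]
  simp only [Set.subset_def, Set.mem_ofPred_eq,
    exists_le_eq_add_natCast_iff (by omega : k < 2 * k + 1)]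
  push Not
  refine ⟨fun h0 i => ?_, fun h => interior_subset_intrinsicInterior (zero_mem_interior_convexHull_polygon h)⟩
  by_contra! hi
  exact zero_notMem_convexHull_polygon hi (intrinsicInterior_subset h0)

theorem stmt11 {k : ℕ} (hk : 1 ≤ k)
    (v : ZMod (2 * k + 1) → EuclideanSpace ℝ (Fin 2))
    (hv : ∀ j : ZMod (2 * k + 1),
      v j = (WithLp.equiv 2 (Fin 2 → ℝ)).symm
        ![Real.cos (2 * π * (j.val : ℝ) / (2 * (k : ℝ) + 1)),
          Real.sin (2 * π * (j.val : ℝ) / (2 * (k : ℝ) + 1))]) :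
    ∀ S : Set (ZMod (2 * k + 1)), S.Nonempty →
      (0 ∈ intrinsicInterior ℝ (convexHull ℝ (v '' S)) ↔
        ¬ ∃ i : ZMod (2 * k + 1),
          S ⊆ {j : ZMod (2 * k + 1) | ∃ ℓ : ℕ, ℓ ≤ k ∧ j = i + (ℓ : ZMod (2 * k + 1))}) :=
  stmt11_general v hv
end
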